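/- Let (X, Y, ⟨·,·⟩) be a dual pairing, T ⊆ X × Y, and w = (x₀,y₀) ∈ T. Then Rockafellar's antiderivative satisfies r_T^w(x) = φ⁽∞⁾_T(x, y₀) - ⟨x₀, y₀⟩ for all x ∈ X. -/

import Mathlib

/-! Reversing a chain `w = c₀, c₁, …, cₙ` into `dᵢ = c₍ₙ₊₁₋ᵢ₎` matches the sum defining
`φ⁽ⁿ⁾_T(x, y₀)` term by term with the one defining `r_T^w(x)`, except that the closing term
`⟨d₍ₙ₎, y₀⟩ = ⟨c₁, y₀⟩` exceeds the opening link `⟨c₁ - x₀, y₀⟩` by `⟨x₀, y₀⟩`. Since subtracting a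
real constant is an order automorphism of `EReal`, it commutes with the suprema. -/

variable {X Y : Type*} [AddCommGroup X] [Module ℝ X] [AddCommGroup Y] [Module ℝ Y]

/-- Rockafellar's antiderivative of `T` based at `(x₀, y₀)`. -/
noncomputable def rock (b : X →ₗ[ℝ] Y →ₗ[ℝ] ℝ) (T : Set (X × Y))
    (x₀ : X) (y₀ : Y) (x : X) : EReal :=
  sSup {r : EReal | ∃ n : ℕ, 1 ≤ n ∧ ∃ c : ℕ → X × Y, c 0 = (x₀, y₀) ∧
    (∀ i ∈ Finset.Icc 1 n, c i ∈ T) ∧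
    r = ((b (x - (c n).1) (c n).2
        + ∑ i ∈ Finset.range n, b ((c (i + 1)).1 - (c i).1) (c i).2 : ℝ) : EReal)}

/-- The `∞`-Fitzpatrick function `φ⁽∞⁾_T = sup_{n ≥ 1} φ⁽ⁿ⁾_T`. -/
noncomputable def fitzInf (b : X →ₗ[ℝ] Y →ₗ[ℝ] ℝ) (T : Set (X × Y))
    (x : X) (y : Y) : EReal :=
  sSup {r : EReal | ∃ n : ℕ, 1 ≤ n ∧ ∃ c : ℕ → X × Y,
    (∀ i ∈ Finset.Icc 1 n, c i ∈ T) ∧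
    r = ((b (x - (c 1).1) (c 1).2
        + ∑ i ∈ Finset.Icc 2 n, b ((c (i - 1)).1 - (c i).1) (c i).2
        + b (c n).1 y : ℝ) : EReal)}

namespace EReal

noncomputable def subCoeOrderIso (a : ℝ) : EReal ≃o EReal where
  toFun t := t - a
  invFun t := t + a
  left_inv _ := EReal.sub_add_cancel
  right_inv _ := EReal.add_sub_cancel_right
  map_rel_iff' {s t} := by
    rw [Equiv.coe_fn_mk, EReal.sub_le_iff_le_add (.inl (coe_ne_bot a)) (.inl (coe_ne_top a)),
      EReal.sub_add_cancel]

theorem sSup_image_sub_coe (S : Set EReal) (a : ℝ) :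
    sSup ((· - (a : EReal)) '' S) = sSup S - a :=
  (map_sSup (subCoeOrderIso a) S).symm

end EReal

open Finset

theorem sum_Icc_two_reversed_chain (b : X →ₗ[ℝ] Y →ₗ[ℝ] ℝ) (c d : ℕ → X × Y) (n : ℕ)
    (hcd : ∀ i ∈ Icc 1 n, d i = c (n + 1 - i)) :
    ∑ i ∈ Icc 2 n, b ((d (i - 1)).1 - (d i).1) (d i).2
      = ∑ i ∈ Ico 1 n, b ((c (i + 1)).1 - (c i).1) (c i).2 := by
  set f : ℕ → ℝ := fun j ↦ b ((c (j + 1)).1 - (c j).1) (c j).2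
  have hterm : ∀ i ∈ Ico 2 (n + 1), b ((d (i - 1)).1 - (d i).1) (d i).2 = f (n + 1 - i) := by
    intro i hi
    rw [mem_Ico] at hi
    rw [hcd (i - 1) (mem_Icc.2 (by omega)), hcd i (mem_Icc.2 (by omega)),
      show n + 1 - (i - 1) = n + 1 - i + 1 by omega]
  rw [← Ico_add_one_right_eq_Icc, sum_congr rfl hterm, sum_Ico_reflect f 2 (Nat.le_succ (n + 1)),
    show n + 1 + 1 - (n + 1) = 1 by omega, show n + 1 + 1 - 2 = n by omega]

theorem fitzInf_summand_sub_eq_rock_summand (b : X →ₗ[ℝ] Y →ₗ[ℝ] ℝ) (x x₀ : X) (y₀ : Y)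
    (c d : ℕ → X × Y) {n : ℕ} (hn : 1 ≤ n) (hc0 : c 0 = (x₀, y₀))
    (hcd : ∀ i ∈ Icc 1 n, d i = c (n + 1 - i)) :
    b (x - (d 1).1) (d 1).2 + ∑ i ∈ Icc 2 n, b ((d (i - 1)).1 - (d i).1) (d i).2
        + b (d n).1 y₀ - b x₀ y₀
      = b (x - (c n).1) (c n).2 + ∑ i ∈ range n, b ((c (i + 1)).1 - (c i).1) (c i).2 := by
  rw [sum_Icc_two_reversed_chain b c d n hcd, range_eq_Ico, sum_eq_sum_Ico_succ_bot hn,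
    hcd 1 (mem_Icc.2 ⟨le_rfl, hn⟩), hcd n (mem_Icc.2 ⟨hn, le_rfl⟩), Nat.add_sub_cancel,
    show n + 1 - n = 0 + 1 by omega, hc0]
  simp only [map_sub, LinearMap.sub_apply]
  ring

theorem rock_eq_fitzInf_sub_general (b : X →ₗ[ℝ] Y →ₗ[ℝ] ℝ) (T : Set (X × Y))
    (x₀ : X) (y₀ : Y) (x : X) :
    rock b T x₀ y₀ x = fitzInf b T x y₀ - ((b x₀ y₀ : ℝ) : EReal) := by
  rw [rock, fitzInf, ← EReal.sSup_image_sub_coe]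
  congr 1
  ext r
  constructor
  · rintro ⟨n, hn, c, hc0, hcT, rfl⟩
    refine ⟨_, ⟨n, hn, fun i ↦ c (n + 1 - i), fun i hi ↦ hcT _ ?_, rfl⟩, ?_⟩
    · rw [mem_Icc] at hi ⊢; omega
    · dsimp only
      rw [← EReal.coe_sub, fitzInf_summand_sub_eq_rock_summand b x x₀ y₀ c _ hn hc0 fun _ _ ↦ rfl]
  · rintro ⟨_, ⟨n, hn, d, hdT, rfl⟩, rfl⟩
    let c : ℕ → X × Y := fun i ↦ if i = 0 then (x₀, y₀) else d (n + 1 - i)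
    have hcd : ∀ i ∈ Icc 1 n, d i = c (n + 1 - i) := by
      intro i hi
      rw [mem_Icc] at hi
      simp only [c, show n + 1 - i ≠ 0 by omega, if_false, show n + 1 - (n + 1 - i) = i by omega]
    refine ⟨n, hn, c, rfl, fun i hi ↦ ?_, ?_⟩
    · rw [mem_Icc] at hi
      simp only [c, show i ≠ 0 by omega, if_false]
      exact hdT _ (mem_Icc.2 (by omega))
    · dsimp only
      rw [← EReal.coe_sub, fitzInf_summand_sub_eq_rock_summand b x x₀ y₀ c d hn rfl hcd]

/-- `r_T^{(x₀,y₀)}(x) = φ⁽∞⁾_T(x, y₀) - ⟨x₀, y₀⟩`. -/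
theorem rock_eq_fitzInf_sub (b : X →ₗ[ℝ] Y →ₗ[ℝ] ℝ) (T : Set (X × Y))
    (x₀ : X) (y₀ : Y) (hw : (x₀, y₀) ∈ T) (x : X) :
    rock b T x₀ y₀ x = fitzInf b T x y₀ - ((b x₀ y₀ : ℝ) : EReal) :=
  rock_eq_fitzInf_sub_general b T x₀ y₀ x
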